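/- Let A and A' be unital C*-algebras, P₁ a nontrivial symmetric projection in A, P₂ = I_A − P₁, A_{jk} = P_j A P_k, and suppose A satisfies (♠): for j ∈ {1,2}, P_j A X = {0} implies X = 0. Fix an integer n ≥ 2 and let φ: A → A' be a bijective map with φ(I_A) = I_{A'} satisfying (•): φ(p_{n*}(A,B,Ξ,…,Ξ)) = p_{n*}(φ(A),φ(B),φ(Ξ),…,φ(Ξ)) for all A, B ∈ A and Ξ ∈ {P₁, P₂, I_A}. Then for j ∈ {1,2} and any A_{jj}, B_{jj} ∈ A_{jj} one has φ(A_{jj} + B_{jj}) = φ(A_{jj}) + φ(B_{jj}). -/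

import Mathlib

/-!
Given `φ S = φ u + φ v` (`φ` is onto), look at the defect `N = S - u - v`. As `pn n C · ξ` is
additive and preserved by `φ`, injectivity gives `pn n C N ξ = 0` as soon as `φ` is already
additive on the pair `(pn n C u ξ, pn n C v ξ)`, e.g. when one of them vanishes. Sandwiched
between Peirce projections, `pn n C N ξ` reduces to `[C, N]_*`, so `(♠)` applied to suitable `C`
kills the Peirce components of `N` one at a time: first for `u` diagonal and `v` off-diagonal,
then for two diagonal elements, where `C = QcP + Q` turns `[C, v]_*` into `[C, w]_*` for an
off-diagonal `w` and the first case applies.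
-/

/-- The `*`-Lie product `[x,y]_* = xy - y x*`. -/
def starLie {R : Type*} [Ring R] [StarRing R] (x y : R) : R := x * y - y * star x

/-- `pn n a b xi = p_{n*}(a, b, xi, ..., xi)` (with `n - 2` trailing copies of `xi`). -/
def pn {R : Type*} [Ring R] [StarRing R] (n : ℕ) (a b ξ : R) : R :=
  (fun z => starLie z ξ)^[n - 2] (starLie a b)

open Function

section StarLie

variable {R : Type*} [Ring R] [StarRing R]

theorem starLie_add_left (x y ξ : R) : starLie (x + y) ξ = starLie x ξ + starLie y ξ := by
  simp only [starLie, add_mul, star_add, mul_add]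
  abel

theorem starLie_add_right (x u v : R) : starLie x (u + v) = starLie x u + starLie x v := by
  simp only [starLie, mul_add, add_mul]
  abel

theorem starLie_sub_right (x u v : R) : starLie x (u - v) = starLie x u - starLie x v := by
  simp only [starLie, mul_sub, sub_mul]
  abel

theorem starLie_zero_left (y : R) : starLie 0 y = 0 := by
  simp [starLie]

theorem starLie_zero_right (x : R) : starLie x 0 = 0 := by
  simp [starLie]

def starLieLeftAddHom (ξ : R) : R →+ R :=
  AddMonoidHom.mk' (starLie · ξ) fun x y => starLie_add_left x y ξ

theorem pn_eq_iterate (n : ℕ) (a b ξ : R) :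
    pn n a b ξ = (starLieLeftAddHom ξ)^[n - 2] (starLie a b) :=
  rfl

theorem pn_congr_starLie {x y x' y' : R} (h : starLie x y = starLie x' y') (n : ℕ) (ξ : R) :
    pn n x y ξ = pn n x' y' ξ := by
  rw [pn, pn, h]

theorem pn_eq_zero_of_starLie_eq_zero {x y : R} (h : starLie x y = 0) (n : ℕ) (ξ : R) :
    pn n x y ξ = 0 := by
  rw [pn_eq_iterate, h, iterate_map_zero]

theorem pn_zero_left (n : ℕ) (y ξ : R) : pn n 0 y ξ = 0 :=
  pn_eq_zero_of_starLie_eq_zero (starLie_zero_left y) n ξ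

theorem pn_zero_right (n : ℕ) (x ξ : R) : pn n x 0 ξ = 0 :=
  pn_eq_zero_of_starLie_eq_zero (starLie_zero_right x) n ξ

theorem pn_add_right (n : ℕ) (x u v ξ : R) :
    pn n x (u + v) ξ = pn n x u ξ + pn n x v ξ := by
  simp only [pn_eq_iterate, starLie_add_right, iterate_map_add]

theorem pn_sub_right (n : ℕ) (x u v ξ : R) :
    pn n x (u - v) ξ = pn n x u ξ - pn n x v ξ := by
  simp only [pn_eq_iterate, starLie_sub_right, iterate_map_sub]

end StarLie

section Corner

variable {R : Type*} [Ring R] [StarRing R] {e f : R}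

theorem mul_starLie_mul_of_mul_eq_zero (he : e * e = e) (hfe : f * e = 0) (w : R) :
    f * starLie w e * e = f * w * e := by
  rw [starLie, mul_sub, sub_mul, ← mul_assoc f e, hfe, zero_mul, zero_mul, sub_zero]
  simp only [mul_assoc, he]

theorem mul_starLie_self_mul (he : e * e = e) (hes : star e = e) (hfe : f * e = 0) (w : R) :
    f * starLie e w * e = -(f * w * e) := by
  rw [starLie, hes, mul_sub, sub_mul, ← mul_assoc f e, hfe, zero_mul, zero_mul, zero_sub]
  simp only [mul_assoc, he]

theorem starLie_mul_eq_zero (hes : star e = e) {u : R} (hl : e * u = 0) (hr : u * e = 0)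
    (x : R) : starLie (x * e) u = 0 := by
  rw [starLie, star_mul, hes, mul_assoc, hl, ← mul_assoc, hr, mul_zero, zero_mul, sub_zero]

theorem mul_pn_mul_of_mul_eq_zero (he : e * e = e) (hfe : f * e = 0) (n : ℕ) (x y : R) :
    f * pn n x y e * e = f * starLie x y * e :=
  Iterate.rec (fun z => f * z * e = f * starLie x y * e) rfl
    (fun w hw => (mul_starLie_mul_of_mul_eq_zero he hfe w).trans hw) (n - 2)

theorem mul_starLie_mul_eq_zero_of_pn_eq_zero (he : e * e = e) (hfe : f * e = 0) {n : ℕ}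
    {x y : R} (h : pn n x y e = 0) : f * starLie x y * e = 0 := by
  rw [← mul_pn_mul_of_mul_eq_zero he hfe n, h, mul_zero, zero_mul]

theorem starLie_self_pn_eq_zero (he : star e = e) (n : ℕ) {x y : R}
    (hl : e * starLie x y = 0) (hr : starLie x y * e = 0) : starLie e (pn n x y e) = 0 := by
  have step : ∀ z : R, e * z = 0 ∧ z * e = 0 →
      e * starLie z e = 0 ∧ starLie z e * e = 0 := by
    rintro z ⟨hzl, hzr⟩
    have hzl' : e * star z = 0 := by simpa [he] using congrArg star hzr
    constructor
    · simp only [starLie, mul_sub, ← mul_assoc, hzl, zero_mul, zero_sub, neg_eq_zero]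
      rw [mul_assoc, hzl', mul_zero]
    · simp only [starLie, hzr, hzl', zero_mul, sub_zero]
  obtain ⟨h₁, h₂⟩ :=
    Iterate.rec (fun z => e * z = 0 ∧ z * e = 0) ⟨hl, hr⟩ step (n - 2)
  rw [starLie, he, pn, h₁, h₂, sub_zero]

end Corner

theorem map_add_of_forall_sub_sub_eq_zero {R R' : Type*} [AddCommGroup R] [Add R']
    {φ : R → R'} (hφ : Surjective φ) {u v : R}
    (h : ∀ S, φ S = φ u + φ v → S - u - v = 0) : φ (u + v) = φ u + φ v := by
  obtain ⟨S, hS⟩ := hφ (φ u + φ v)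
  have hS' := h S hS
  rw [sub_sub, sub_eq_zero] at hS'
  rwa [← hS']

section PreservesPn

variable {R R' : Type*} [Ring R] [StarRing R] [Ring R'] [StarRing R']

/-- `φ` satisfies the identity `(•)` for one fixed `ξ`. -/
def PreservesPn (φ : R → R') (n : ℕ) (ξ : R) : Prop :=
  ∀ a b : R, φ (pn n a b ξ) = pn n (φ a) (φ b) (φ ξ)

namespace PreservesPn

variable {φ : R → R'} {n : ℕ} {ξ : R}

theorem map_zero (h : PreservesPn φ n ξ) (hφ : Surjective φ) : φ 0 = 0 := by
  obtain ⟨a, ha⟩ := hφ 0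
  simpa [ha, pn_zero_left, pn_zero_right] using h 0 a

theorem map_pn_of_map_eq_add (h : PreservesPn φ n ξ) {S u v : R} (hS : φ S = φ u + φ v)
    (C : R) : φ (pn n C S ξ) = φ (pn n C u ξ) + φ (pn n C v ξ) := by
  rw [h, hS, pn_add_right, ← h, ← h]

theorem pn_sub_sub_eq_zero (h : PreservesPn φ n ξ) (hφ : Injective φ) {S u v C : R}
    (hS : φ S = φ u + φ v)
    (hC : φ (pn n C u ξ + pn n C v ξ) = φ (pn n C u ξ) + φ (pn n C v ξ)) :
    pn n C (S - u - v) ξ = 0 := by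
  have hCS : pn n C S ξ = pn n C u ξ + pn n C v ξ :=
    hφ ((h.map_pn_of_map_eq_add hS C).trans hC.symm)
  rw [pn_sub_right, pn_sub_right, hCS]
  abel

end PreservesPn

end PreservesPn

theorem mul_mul_of_mul_eq {M : Type*} [Semigroup M] {a b c : M} (h : a * b = c) (x : M) :
    a * (b * x) = c * x := by
  rw [← mul_assoc, h]

section Peirce

variable {R : Type*} [Ring R] [StarRing R]

structure IsPeircePair (P Q : R) : Prop where
  mul_self : P * P = P
  star_eq : star P = P
  add_eq_one : P + Q = 1

/-- Condition `(♠)` for the projection `P`. -/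
def Spade (P : R) : Prop :=
  ∀ X : R, (∀ Y : R, P * Y * X = 0) → X = 0

theorem Spade.eq_zero_of_forall_mul_mul_eq_zero {P : R} (hs : Spade P) (hP : star P = P) {X : R}
    (h : ∀ Y : R, X * Y * P = 0) : X = 0 := by
  refine star_eq_zero.mp (hs _ fun Y => ?_)
  simpa [mul_assoc, hP] using congrArg star (h (star Y))

namespace IsPeircePair

variable {P Q : R}

theorem eq_one_sub (h : IsPeircePair P Q) : Q = 1 - P :=
  eq_sub_of_add_eq' h.add_eq_one

theorem mul_self_right (h : IsPeircePair P Q) : Q * Q = Q := by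
  rw [h.eq_one_sub, mul_one_sub, sub_mul, one_mul, h.mul_self, sub_self, sub_zero]

theorem star_eq_right (h : IsPeircePair P Q) : star Q = Q := by
  rw [h.eq_one_sub, star_sub, star_one, h.star_eq]

theorem mul_eq_zero (h : IsPeircePair P Q) : P * Q = 0 := by
  rw [h.eq_one_sub, mul_one_sub, h.mul_self, sub_self]

theorem mul_eq_zero' (h : IsPeircePair P Q) : Q * P = 0 := by
  rw [h.eq_one_sub, sub_mul, one_mul, h.mul_self, sub_self]

/-- A conjunction, so that `simp [h.mul_table]` uses every entry as a rewrite rule. -/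
theorem mul_table (h : IsPeircePair P Q) :
    P * P = P ∧ Q * Q = Q ∧ P * Q = 0 ∧ Q * P = 0 ∧ star P = P ∧ star Q = Q ∧
      ∀ x : R,
        P * (P * x) = P * x ∧ Q * (Q * x) = Q * x ∧ P * (Q * x) = 0 ∧ Q * (P * x) = 0 :=
  ⟨h.mul_self, h.mul_self_right, h.mul_eq_zero, h.mul_eq_zero', h.star_eq, h.star_eq_right,
    fun x => ⟨mul_mul_of_mul_eq h.mul_self x, mul_mul_of_mul_eq h.mul_self_right x,
      by rw [mul_mul_of_mul_eq h.mul_eq_zero, zero_mul],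
      by rw [mul_mul_of_mul_eq h.mul_eq_zero', zero_mul]⟩⟩

theorem symm (h : IsPeircePair P Q) : IsPeircePair Q P :=
  ⟨h.mul_self_right, h.star_eq_right, by rw [add_comm, h.add_eq_one]⟩

theorem eq_mul_mul_of (h : IsPeircePair P Q) {N : R} (hQP : Q * N * P = 0)
    (hPQ : P * N * Q = 0) (hQQ : Q * N * Q = 0) :
    P * N * P = N := by
  conv_rhs => rw [← one_mul N, ← mul_one (1 * N), ← h.add_eq_one]
  simp only [add_mul, mul_add, hQP, hPQ, hQQ, add_zero]

end IsPeircePair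

end Peirce

section Additivity

variable {R R' : Type*} [Ring R] [StarRing R] [Ring R'] [StarRing R'] {P Q : R} {φ : R → R'}
  {n : ℕ}

theorem IsPeircePair.mul_sub_sub_mul_eq (h : IsPeircePair P Q) (hsP : Spade P) (hsQ : Spade Q)
    (hbP : PreservesPn φ n P) (hbQ : PreservesPn φ n Q) (hφ : Injective φ) (hφ0 : φ 0 = 0)
    {S u v : R} (hQu : Q * u = 0) (huQ : u * Q = 0) (hS : φ S = φ u + φ v) :
    P * (S - u - v) * P = S - u - v := by
  set N := S - u - v
  have hpn : ∀ {ξ : R}, PreservesPn φ n ξ → ∀ x : R, pn n (x * Q) N ξ = 0 := fun hb x =>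
    hb.pn_sub_sub_eq_zero hφ hS <| by
      rw [pn_eq_zero_of_starLie_eq_zero (starLie_mul_eq_zero h.star_eq_right hQu huQ x),
        zero_add, hφ0, zero_add]
  have hQP : Q * N * P = 0 := hsQ _ fun Y => by
    rw [show Q * Y * (Q * N * P) = Q * starLie (Q * Y * Q) N * P by
      simp [starLie, star_mul, mul_assoc, mul_sub, sub_mul, h.mul_table]]
    exact mul_starLie_mul_eq_zero_of_pn_eq_zero h.mul_self h.mul_eq_zero' (hpn hbP _)
  have hPQ : P * N * Q = 0 := hsQ.eq_zero_of_forall_mul_mul_eq_zero h.star_eq_right fun Y => by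
    rw [show P * N * Q * Y * Q = -(P * starLie (Q * star Y * Q) N * Q) by
      simp [starLie, star_mul, mul_assoc, mul_sub, h.mul_table]]
    rw [mul_starLie_mul_eq_zero_of_pn_eq_zero h.mul_self_right h.mul_eq_zero (hpn hbQ _),
      neg_zero]
  have hQQ : Q * N * Q = 0 := hsP _ fun Y => by
    rw [show P * Y * (Q * N * Q) = P * starLie (P * Y * Q) N * Q by
      simp [starLie, star_mul, mul_assoc, mul_sub, sub_mul, h.mul_table]]
    exact mul_starLie_mul_eq_zero_of_pn_eq_zero h.mul_self_right h.mul_eq_zero (hpn hbQ _)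
  exact h.eq_mul_mul_of hQP hPQ hQQ

theorem IsPeircePair.map_add_offDiag (h : IsPeircePair P Q) (hsP : Spade P) (hsQ : Spade Q)
    (hbP : PreservesPn φ n P) (hbQ : PreservesPn φ n Q) (hφ : Bijective φ) (x y z : R) :
    φ (P * x * P + (P * y * Q + Q * z * P)) = φ (P * x * P) + φ (P * y * Q + Q * z * P) := by
  have hφ0 := hbP.map_zero hφ.2
  refine map_add_of_forall_sub_sub_eq_zero hφ.2 fun S hS => ?_
  set u := P * x * P
  set v := P * y * Q + Q * z * P
  set N := S - u - v
  have hN : P * N * P = N := h.mul_sub_sub_mul_eq hsP hsQ hbP hbQ hφ.1 hφ0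
    (by simp [u, mul_assoc, h.mul_table]) (by simp [u, mul_assoc, h.mul_table]) hS
  refine hsQ N fun c => ?_
  have hv : pn n P (pn n (Q * c * P) v P) P = 0 := by
    refine pn_eq_zero_of_starLie_eq_zero (starLie_self_pn_eq_zero h.star_eq n ?_ ?_) n P
    · simp [v, starLie, star_mul, mul_assoc, add_mul, mul_add, mul_sub, h.mul_table]
    · simp [v, starLie, star_mul, mul_assoc, add_mul, sub_mul, h.mul_table]
  have hPN : pn n P (pn n (Q * c * P) N P) P = 0 := by
    have := hbP.pn_sub_sub_eq_zero hφ.1 (hbP.map_pn_of_map_eq_add hS (Q * c * P)) (C := P)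
      (by rw [hv, add_zero, hφ0, add_zero])
    rwa [← pn_sub_right, ← pn_sub_right] at this
  calc Q * c * N = Q * starLie (Q * c * P) N * P := by
        conv_lhs => rw [← hN]
        simp [starLie, star_mul, mul_assoc, mul_sub, sub_mul, h.mul_table]
    _ = Q * pn n (Q * c * P) N P * P :=
        (mul_pn_mul_of_mul_eq_zero h.mul_self h.mul_eq_zero' n _ _).symm
    _ = -(Q * starLie P (pn n (Q * c * P) N P) * P) := by
        rw [mul_starLie_self_mul h.mul_self h.star_eq h.mul_eq_zero', neg_neg]
    _ = 0 := by
        rw [mul_starLie_mul_eq_zero_of_pn_eq_zero h.mul_self h.mul_eq_zero' hPN, neg_zero]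

theorem IsPeircePair.map_add_corner (h : IsPeircePair P Q) (hsP : Spade P) (hsQ : Spade Q)
    (hbP : PreservesPn φ n P) (hbQ : PreservesPn φ n Q) (hφ : Bijective φ) (x y : R) :
    φ (P * x * P + P * y * P) = φ (P * x * P) + φ (P * y * P) := by
  refine map_add_of_forall_sub_sub_eq_zero hφ.2 fun T hT => ?_
  set a := P * x * P
  set b := P * y * P
  set M := T - a - b
  have hM : P * M * P = M := h.mul_sub_sub_mul_eq hsP hsQ hbP hbQ hφ.1 (hbP.map_zero hφ.2)
    (by simp [a, mul_assoc, h.mul_table]) (by simp [a, mul_assoc, h.mul_table]) hT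
  refine hsQ M fun c => ?_
  set C := Q * c * P + Q
  set w := P * (y * P * star c) * Q + Q * (c * P * y) * P
  have hbw : starLie C b = starLie C w := by
    simp only [C, b, w, starLie, star_mul, star_add, mul_assoc, mul_add, add_mul, h.mul_table,
      mul_zero, add_zero, zero_add]
    abel
  have hC : φ (pn n C a P + pn n C b P) = φ (pn n C a P) + φ (pn n C b P) := by
    rw [pn_congr_starLie hbw, ← pn_add_right]
    exact hbP.map_pn_of_map_eq_add (h.map_add_offDiag hsP hsQ hbP hbQ hφ _ _ _) C
  calc Q * c * M = Q * starLie C M * P := by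
        rw [← hM]
        simp [C, starLie, star_mul, mul_assoc, mul_add, add_mul, mul_sub, h.mul_table]
    _ = 0 := mul_starLie_mul_eq_zero_of_pn_eq_zero h.mul_self h.mul_eq_zero'
        (hbP.pn_sub_sub_eq_zero hφ.1 hT hC)

end Additivity

set_option linter.unusedSectionVars false

variable {A A' : Type*}
  [NormedRing A] [StarRing A] [CStarRing A] [NormedAlgebra ℂ A]
  [CompleteSpace A] [StarModule ℂ A]
  [NormedRing A'] [StarRing A'] [CStarRing A'] [NormedAlgebra ℂ A']
  [CompleteSpace A'] [StarModule ℂ A']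

theorem stmt8_general
    (P₁ : A) (hP₁proj : P₁ * P₁ = P₁) (hP₁star : star P₁ = P₁)
    (P₂ : A) (hP₂ : P₂ = 1 - P₁)
    (hspade : ∀ Pj ∈ ({P₁, P₂} : Set A), ∀ X : A, (∀ Y : A, Pj * Y * X = 0) → X = 0)
    (n : ℕ)
    (φ : A → A') (hbij : Function.Bijective φ)
    (hbullet : ∀ a b : A, ∀ Ξ ∈ ({P₁, P₂, 1} : Set A),
      φ (pn n a b Ξ) = pn n (φ a) (φ b) (φ Ξ))
    :
    ∀ Pj ∈ ({P₁, P₂} : Set A),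
      ∀ a b : A, (∃ x : A, a = Pj * x * Pj) → (∃ y : A, b = Pj * y * Pj) →
        φ (a + b) = φ a + φ b := by
  rintro Pj hPj _ _ ⟨x, rfl⟩ ⟨y, rfl⟩
  have h : IsPeircePair P₁ P₂ := ⟨hP₁proj, hP₁star, by rw [hP₂, add_sub_cancel]⟩
  have hs₁ : Spade P₁ := hspade P₁ (by simp)
  have hs₂ : Spade P₂ := hspade P₂ (by simp)
  have hb₁ : PreservesPn φ n P₁ := fun a b => hbullet a b P₁ (by simp)
  have hb₂ : PreservesPn φ n P₂ := fun a b => hbullet a b P₂ (by simp)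
  rcases hPj with rfl | rfl
  · exact h.map_add_corner hs₁ hs₂ hb₁ hb₂ hbij x y
  · exact h.symm.map_add_corner hs₂ hs₁ hb₂ hb₁ hbij x y

theorem stmt8
    (P₁ : A) (hP₁proj : P₁ * P₁ = P₁) (hP₁star : star P₁ = P₁)
    (hP₁ne0 : P₁ ≠ 0) (hP₁ne1 : P₁ ≠ 1)
    (P₂ : A) (hP₂ : P₂ = 1 - P₁)
    (hspade : ∀ Pj ∈ ({P₁, P₂} : Set A), ∀ X : A, (∀ Y : A, Pj * Y * X = 0) → X = 0)
    (n : ℕ) (hn : 2 ≤ n)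
    (φ : A → A') (hbij : Function.Bijective φ) (hunit : φ 1 = 1)
    (hbullet : ∀ a b : A, ∀ Ξ ∈ ({P₁, P₂, 1} : Set A),
      φ (pn n a b Ξ) = pn n (φ a) (φ b) (φ Ξ))
    :
    ∀ Pj ∈ ({P₁, P₂} : Set A),
      ∀ a b : A, (∃ x : A, a = Pj * x * Pj) → (∃ y : A, b = Pj * y * Pj) →
        φ (a + b) = φ a + φ b :=
  stmt8_general P₁ hP₁proj hP₁star P₂ hP₂ hspade n φ hbij hbullet
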